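/- arXiv:1906.10047 — 3 statements merged into one kernel-verified Lean document; each statement's English description precedes it below -/
import Mathlib

section
/- Let p₁,…,pₙ be τ-multi-polynomials that are similar (erasing τ and abstracting coefficients yields the same abstract MP) and whose common abstraction ⌊p⌋ is neat (dependency graph minus self-loops is a DAG respecting the index order, and no component has a monomial divisible by its own variable other than of degree 1). Define the self-dependent cut ⌈q⌉ of such q by ⌈q⌉[i] = xᵢ if i is self-dependent and ⌈q⌉[i] = q[i] otherwise. Then for each ℓ ≤ n, the composition q_ℓ := p₁ ∘ ⌈p₂⌉ ∘ ⋯ ∘ ⌈p_ℓ⌉ has the property that for every i, q_ℓ[i] depends only on variables x_j that are either self-dependent or satisfy j ≤ i − ℓ. -/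
open MvPolynomial

/-- Variable set for τ-polynomials: `n` program variables plus the extra variable τ. -/
abbrev Vn (n : ℕ) := Fin n ⊕ Unit

open Classical in
/-- The linear part `Lin(r)`: the sum of monomials of `r` of the form `a·xᵢ`
(linear in a single program variable, τ-free). -/
noncomputable def linPart {n : ℕ} (r : MvPolynomial (Vn n) ℕ) : MvPolynomial (Vn n) ℕ :=
  ∑ m ∈ r.support.filter (fun m => ∃ i : Fin n, m = Finsupp.single (Sum.inl i) 1),
    monomial m (r.coeff m)

open Classical in
/-- The non-linear part `NonLin(r)`: all remaining monomials, so `r = Lin(r) + NonLin(r)`. -/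
noncomputable def nonLinPart {n : ℕ} (r : MvPolynomial (Vn n) ℕ) : MvPolynomial (Vn n) ℕ :=
  ∑ m ∈ r.support.filter (fun m => ¬ ∃ i : Fin n, m = Finsupp.single (Sum.inl i) 1),
    monomial m (r.coeff m)

/-- Evaluation of a τ-polynomial at `x ∈ ℕⁿ` and `τ = t`, as a real number. -/
noncomputable def evalR {n : ℕ} (r : MvPolynomial (Vn n) ℕ) (x : Fin n → ℕ) (t : ℕ) : ℝ :=
  aeval (Sum.elim (fun i => (x i : ℝ)) (fun _ => (t : ℝ))) r

/-- `c⋄r = Lin(r) + c·NonLin(r)`, evaluated at `(x, t)`. -/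
noncomputable def cDia {n : ℕ} (c : ℝ) (r : MvPolynomial (Vn n) ℕ)
    (x : Fin n → ℕ) (t : ℕ) : ℝ :=
  evalR (linPart r) x t + c * evalR (nonLinPart r) x t

/-- Composition `r ∘ p`: substitute `p[i]` for `xᵢ` in `r`, leaving τ fixed. -/
noncomputable def tcomp {n : ℕ} (r : MvPolynomial (Vn n) ℕ)
    (p : Fin n → MvPolynomial (Vn n) ℕ) : MvPolynomial (Vn n) ℕ :=
  bind₁ (Sum.elim p (fun _ => X (Sum.inr ()))) r

/-- Evaluation of a τ-multi-polynomial component over ℕ at `(x, t)`. -/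
noncomputable def evalN {n : ℕ} (r : MvPolynomial (Vn n) ℕ) (x : Fin n → ℕ) (t : ℕ) : ℕ :=
  eval (Sum.elim x (fun _ => t)) r


/-- The abstraction map `α`: replace every nonzero coefficient by `1`. -/
noncomputable def absP {σ : Type*} (p : MvPolynomial σ ℕ) : MvPolynomial σ ℕ :=
  ∑ m ∈ p.support, monomial m 1

/-- `⌊q⌋ = α(q[1/τ])`: substitute `1` for τ, then flatten coefficients to 0/1. -/
noncomputable def flat {n : ℕ} (q : MvPolynomial (Vn n) ℕ) : MvPolynomial (Fin n) ℕ :=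
  absP (aeval (Sum.elim X (fun _ => 1)) q)

/-- Composition of τ-multi-polynomials: `(f ∘ g)[i] = f[i](g)`, τ fixed. -/
noncomputable def mpComp {n : ℕ} (f g : Fin n → MvPolynomial (Vn n) ℕ) :
    Fin n → MvPolynomial (Vn n) ℕ :=
  fun i => tcomp (f i) g

open Classical in
/-- The self-dependent cut `⌈q⌉` relative to the common abstraction `A`:
self-dependent components are replaced by the identity `xᵢ`. -/
noncomputable def cutA {n : ℕ} (A : Fin n → MvPolynomial (Fin n) ℕ)
    (q : Fin n → MvPolynomial (Vn n) ℕ) : Fin n → MvPolynomial (Vn n) ℕ :=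
  fun i => if i ∈ (A i).vars then X (Sum.inl i) else q i

/-- `chainMP A p ℓ = q_{ℓ+1} = p₁ ∘ ⌈p₂⌉ ∘ ⋯ ∘ ⌈p_{ℓ+1}⌉`. -/
noncomputable def chainMP {n : ℕ} (A : Fin n → MvPolynomial (Fin n) ℕ)
    (p : ℕ → Fin n → MvPolynomial (Vn n) ℕ) :
    ℕ → Fin n → MvPolynomial (Vn n) ℕ
  | 0 => p 1
  | ℓ + 1 => mpComp (chainMP A p ℓ) (cutA A (p (ℓ + 2)))

/-!
Induction on `ℓ`. A variable `x_j` of `q_{ℓ+1}[i]` arises from some `x_k` of `q_ℓ[i]` and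
`x_j` of `⌈p_{ℓ+1}⌉[k]`. If `k` is self-dependent the cut makes that component `x_k`, so
`j = k` is self-dependent. Otherwise `k ≤ i − ℓ` by induction, and `j` is a dependence of the
non-self-dependent index `k` in the DAG `⌊p⌋`, so `j < k`. Dependences of `p` are read off
`⌊p⌋` because over `ℕ` no two monomials cancel when `τ` is set to `1`.
-/

lemma aeval_sumElim_X_one_monomial {σ τ R : Type*} [CommSemiring R] [Fintype σ] [Fintype τ]
    (m : σ ⊕ τ →₀ ℕ) (c : R) :
    aeval (Sum.elim X (fun _ => 1) : σ ⊕ τ → MvPolynomial σ R) (monomial m c)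
      = monomial (m.comapDomain Sum.inl Sum.inl_injective.injOn) c := by
  rw [aeval_monomial, monomial_eq, algebraMap_eq, Finsupp.prod_fintype _ _ (by simp),
    Finsupp.prod_fintype _ _ (by simp), Fintype.prod_sum_type]
  simp

lemma comapDomain_inl_mem_support_aeval {σ τ : Type*} [Fintype σ] [Fintype τ]
    {q : MvPolynomial (σ ⊕ τ) ℕ} {m : σ ⊕ τ →₀ ℕ} (hm : m ∈ q.support) :
    m.comapDomain Sum.inl Sum.inl_injective.injOn ∈
      (aeval (Sum.elim X (fun _ => 1) : σ ⊕ τ → MvPolynomial σ ℕ) q).support := by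
  classical
  rw [q.as_sum, map_sum, mem_support_iff, coeff_sum]
  intro h
  have hm0 := Finset.sum_eq_zero_iff.mp h m hm
  rw [aeval_sumElim_X_one_monomial, coeff_monomial, if_pos rfl] at hm0
  exact mem_support_iff.mp hm hm0

lemma absP_support {σ : Type*} (p : MvPolynomial σ ℕ) : (absP p).support = p.support := by
  classical
  ext m
  simp only [mem_support_iff, absP, coeff_sum, coeff_monomial, Finset.sum_ite_eq']
  split_ifs <;> simp_all

lemma mem_vars_flat {n : ℕ} {q : MvPolynomial (Vn n) ℕ} {j : Fin n}
    (h : Sum.inl j ∈ q.vars) : j ∈ (flat q).vars := by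
  obtain ⟨m, hm, hj⟩ := (mem_vars_iff_mem_support _).mp h
  rw [mem_vars_iff_mem_support]
  exact ⟨_, (absP_support _).symm ▸ comapDomain_inl_mem_support_aeval hm, by simpa using hj⟩

lemma mem_vars_mpComp {n : ℕ} {f g : Fin n → MvPolynomial (Vn n) ℕ} {i j : Fin n}
    (h : Sum.inl j ∈ (mpComp f g i).vars) :
    ∃ k, Sum.inl k ∈ (f i).vars ∧ Sum.inl j ∈ (g k).vars := by
  obtain ⟨v, hv, hjv⟩ := mem_vars_bind₁ _ _ h
  rcases v with k | _
  · exact ⟨k, hv, hjv⟩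
  · simp at hjv

section SelfDependentCut

variable {n : ℕ}

def DepthBounded (A : Fin n → MvPolynomial (Fin n) ℕ) (d : ℕ)
    (f : Fin n → MvPolynomial (Vn n) ℕ) : Prop :=
  ∀ i j : Fin n, Sum.inl j ∈ (f i).vars → j ∈ (A j).vars ∨ (j : ℕ) + d ≤ i

variable {A : Fin n → MvPolynomial (Fin n) ℕ}

lemma mem_vars_self_or_lt (hDAG : ∀ i j : Fin n, j ∈ (A i).vars → j ≤ i) {i j : Fin n}
    (h : j ∈ (A i).vars) : j ∈ (A j).vars ∨ j < i := by
  rcases (hDAG i j h).eq_or_lt with rfl | hlt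
  exacts [Or.inl h, Or.inr hlt]

lemma depthBounded_one (hDAG : ∀ i j : Fin n, j ∈ (A i).vars → j ≤ i)
    {q : Fin n → MvPolynomial (Vn n) ℕ} (hq : ∀ i, flat (q i) = A i) :
    DepthBounded A 1 q := fun i _ h =>
  (mem_vars_self_or_lt hDAG (hq i ▸ mem_vars_flat h)).imp_right Fin.lt_def.mp

lemma DepthBounded.mpComp_cutA (hDAG : ∀ i j : Fin n, j ∈ (A i).vars → j ≤ i) {d : ℕ}
    {f q : Fin n → MvPolynomial (Vn n) ℕ}
    (hf : DepthBounded A d f) (hq : ∀ i, flat (q i) = A i) :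
    DepthBounded A (d + 1) (mpComp f (cutA A q)) := by
  intro i j h
  obtain ⟨k, hki, hjk⟩ := mem_vars_mpComp h
  by_cases hk : k ∈ (A k).vars
  · rw [cutA, if_pos hk, vars_X, Finset.mem_singleton, Sum.inl.injEq] at hjk
    exact Or.inl (hjk ▸ hk)
  · rw [cutA, if_neg hk] at hjk
    have hkd := (hf i k hki).resolve_left hk
    refine (mem_vars_self_or_lt hDAG (hq k ▸ mem_vars_flat hjk)).imp_right fun hjk => ?_
    rw [Fin.lt_def] at hjk
    omega

end SelfDependentCut

theorem stmt11_general {n : ℕ} (A : Fin n → MvPolynomial (Fin n) ℕ)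
    (p : ℕ → Fin n → MvPolynomial (Vn n) ℕ)
    (hsim : ∀ k, 1 ≤ k → k ≤ n → ∀ i, flat (p k i) = A i)
    (hneatDAG : ∀ i j : Fin n, j ∈ (A i).vars → j ≤ i) :
    ∀ ℓ : ℕ, ℓ + 1 ≤ n → ∀ i j : Fin n,
      (Sum.inl j : Vn n) ∈ (chainMP A p ℓ i).vars →
        j ∈ (A j).vars ∨ (j : ℕ) + (ℓ + 1) ≤ (i : ℕ) := by
  intro ℓ hℓ
  induction ℓ with
  | zero => exact depthBounded_one hneatDAG (hsim 1 le_rfl hℓ)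
  | succ ℓ ih =>
    exact DepthBounded.mpComp_cutA hneatDAG (ih (by omega)) (hsim (ℓ + 2) (by omega) hℓ)

/-- Self-dependent-cut lemma.  Let `p₁,…,pₙ` be similar τ-multi-polynomials with
common neat abstraction `A`.  Then (1-based) `q_ℓ = p₁ ∘ ⌈p₂⌉ ∘ ⋯ ∘ ⌈p_ℓ⌉`
satisfies: each `q_ℓ[i]` depends only on variables `x_j` which are self-dependent
or have `j ≤ i − ℓ`.  (Here `chainMP A p ℓ = q_{ℓ+1}`, and `j ≤ i − ℓ` in 1-based
indexing reads `j + ℓ + 1 ≤ i` on 0-based values for `q_{ℓ+1}`.) -/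
theorem stmt11 {n : ℕ} (A : Fin n → MvPolynomial (Fin n) ℕ)
    (p : ℕ → Fin n → MvPolynomial (Vn n) ℕ)
    (hsim : ∀ k, 1 ≤ k → k ≤ n → ∀ i, flat (p k i) = A i)
    (hneatDAG : ∀ i j : Fin n, j ∈ (A i).vars → j ≤ i)
    (hneatSelf : ∀ i : Fin n, ∀ m ∈ (A i).support,
      m i ≠ 0 → m = Finsupp.single i 1) :
    ∀ ℓ : ℕ, ℓ + 1 ≤ n → ∀ i j : Fin n,
      (Sum.inl j : Vn n) ∈ (chainMP A p ℓ i).vars →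
        j ∈ (A j).vars ∨ (j : ℕ) + (ℓ + 1) ≤ (i : ℕ) :=
  stmt11_general A p hsim hneatDAG
end

section
/- Let p and q be similar, τ-closed iterative τ-multi-polynomials, so each self-dependent component has the form p[i] = xᵢ + τ·p[i]′. Define τ-absorbing composition (q ⋆ p)[i] = xᵢ + τ·(p[i]′ ⊔ (q[i]′ ∘ p)) for self-dependent i, and (q ⋆ p)[i] = q[i] ∘ p otherwise. Suppose p bounds a weighted trace σ of weight t_s (meaning: for every concrete execution of σ from state x ending in y, and every t ≥ t_s, y ≤ p(x,t) componentwise) and q bounds a weighted trace ρ of weight t_r. Then q ⋆ p bounds the concatenation σρ, whose weight is t_s + t_r. -/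
open MvPolynomial

/-- The join `p ⊔ q`: coefficientwise maximum. -/
noncomputable def pjoin {σ : Type*} [DecidableEq σ] (p q : MvPolynomial σ ℕ) : MvPolynomial σ ℕ :=
  ∑ m ∈ p.support ∪ q.support, monomial m (max (p.coeff m) (q.coeff m))

/-- A weighted trace: a list of steps, each a τ-multi-polynomial with a weight. -/
abbrev WTrace (n : ℕ) := List ((Fin n → MvPolynomial (Vn n) ℕ) × ℕ)

/-- A concrete execution of a weighted trace: each step applies its
multi-polynomial with its weight substituted for τ. -/
noncomputable def runW {n : ℕ} (σ : WTrace n) (x : Fin n → ℕ) : Fin n → ℕ :=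
  σ.foldl (fun s fw => fun i => eval (Sum.elim s (fun _ => fw.2)) (fw.1 i)) x

/-- The weight of a trace: the sum of the step weights. -/
def wgt {n : ℕ} (σ : WTrace n) : ℕ := (σ.map Prod.snd).sum

/-- `p` bounds the weighted trace `σ`: for every concrete execution of `σ` from
`x` ending in `y` and every `t ≥ wgt σ`, `y ≤ p(x,t)` componentwise. -/
def boundsTr {n : ℕ} (p : Fin n → MvPolynomial (Vn n) ℕ) (σ : WTrace n) : Prop :=
  ∀ x : Fin n → ℕ, ∀ t : ℕ, wgt σ ≤ t → ∀ i,
    runW σ x i ≤ eval (Sum.elim x (fun _ => t)) (p i)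

/-!
Evaluation of polynomials with coefficients in ℕ is monotone both in the point and in the
coefficients. For a component `i` that is not self-dependent this already shows that `q[i] ∘ p`
bounds `σρ`: the run of `σ` ends below `p(x, t)`, and the run of `ρ` from there ends below
`q[i](p(x, t), t)`. For a self-dependent component the run of `σ` raises `xᵢ` by at most
`wgt σ · p[i]′(x)` and the run of `ρ` by at most `wgt ρ · q[i]′(p(x, t))`; both `p[i]′` and
`q[i]′ ∘ p` are coefficientwise below their join, and `wgt σ + wgt ρ = wgt (σρ) ≤ t`.
-/

section EvalMonotone

variable {ι : Type*}

theorem eval_le_eval_of_le (φ : MvPolynomial ι ℕ) {v w : ι → ℕ} (h : v ≤ w) :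
    eval v φ ≤ eval w φ := by
  induction φ using MvPolynomial.induction_on with
  | C a => simp
  | add f g hf hg => simpa using Nat.add_le_add hf hg
  | mul_X f s hf => simpa using Nat.mul_le_mul hf (h s)

theorem eval_le_eval_of_coeff_le {a b : MvPolynomial ι ℕ} (h : ∀ m, a.coeff m ≤ b.coeff m)
    (v : ι → ℕ) : eval v a ≤ eval v b := by
  obtain ⟨c, rfl⟩ : ∃ c, b = a + c :=
    ⟨.ofCoeff (AddMonoidAlgebra.coeff b - AddMonoidAlgebra.coeff a),
      by ext m; exact (Nat.add_sub_of_le (h m)).symm⟩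
  simp

theorem coeff_pjoin [DecidableEq ι] (a b : MvPolynomial ι ℕ) (m : ι →₀ ℕ) :
    (pjoin a b).coeff m = max (a.coeff m) (b.coeff m) := by
  rw [pjoin, coeff_sum]
  simp only [coeff_monomial, Finset.sum_ite_eq', Finset.mem_union, mem_support_iff]
  split_ifs with hm
  · rfl
  · simp only [not_or, not_not] at hm
    simp [hm.1, hm.2]

theorem eval_le_eval_pjoin_left [DecidableEq ι] (a b : MvPolynomial ι ℕ) (v : ι → ℕ) :
    eval v a ≤ eval v (pjoin a b) :=
  eval_le_eval_of_coeff_le (fun m => (coeff_pjoin a b m).symm ▸ le_max_left _ _) v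

theorem eval_le_eval_pjoin_right [DecidableEq ι] (a b : MvPolynomial ι ℕ) (v : ι → ℕ) :
    eval v b ≤ eval v (pjoin a b) :=
  eval_le_eval_of_coeff_le (fun m => (coeff_pjoin a b m).symm ▸ le_max_right _ _) v

end EvalMonotone

theorem eval_tcomp {n : ℕ} (r : MvPolynomial (Vn n) ℕ) (p : Fin n → MvPolynomial (Vn n) ℕ)
    (x : Fin n → ℕ) (t : ℕ) :
    eval (Sum.elim x fun _ => t) (tcomp r p)
      = eval (Sum.elim (fun j => eval (Sum.elim x fun _ => t) (p j)) fun _ => t) r := by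
  rw [tcomp, eval, eval₂Hom_bind₁]
  congr 2
  funext s
  cases s <;> simp

section Traces

variable {n : ℕ}

theorem wgt_append (σ ρ : WTrace n) : wgt (σ ++ ρ) = wgt σ + wgt ρ := by
  simp [wgt]

theorem runW_append (σ ρ : WTrace n) (x : Fin n → ℕ) :
    runW (σ ++ ρ) x = runW ρ (runW σ x) :=
  List.foldl_append

theorem boundsTr_tcomp_append {p q : Fin n → MvPolynomial (Vn n) ℕ} {σ ρ : WTrace n}
    (hbp : boundsTr p σ) (hbq : boundsTr q ρ) :
    boundsTr (fun i => tcomp (q i) p) (σ ++ ρ) := by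
  intro x t ht i
  rw [wgt_append] at ht
  rw [runW_append, eval_tcomp]
  refine (hbq _ t (by omega) i).trans (eval_le_eval_of_le _ ?_)
  exact Sum.elim_le_elim_iff.2 ⟨hbp x t (by omega), le_rfl⟩

theorem boundsTr.runW_le_of_eq_add_mul {p : Fin n → MvPolynomial (Vn n) ℕ} {σ : WTrace n}
    (hb : boundsTr p σ) {i : Fin n} {p'ᵢ : MvPolynomial (Vn n) ℕ}
    (hpi : p i = X (Sum.inl i) + X (Sum.inr ()) * p'ᵢ) (x : Fin n → ℕ) :
    runW σ x i ≤ x i + wgt σ * eval (Sum.elim x fun _ => wgt σ) p'ᵢ := by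
  simpa [hpi] using hb x (wgt σ) le_rfl i

theorem runW_append_le_absorb {p q : Fin n → MvPolynomial (Vn n) ℕ} {σ ρ : WTrace n}
    (hbp : boundsTr p σ) (hbq : boundsTr q ρ) {i : Fin n} {p'ᵢ q'ᵢ : MvPolynomial (Vn n) ℕ}
    (hpi : p i = X (Sum.inl i) + X (Sum.inr ()) * p'ᵢ)
    (hqi : q i = X (Sum.inl i) + X (Sum.inr ()) * q'ᵢ)
    (x : Fin n → ℕ) {t : ℕ} (ht : wgt (σ ++ ρ) ≤ t) :
    runW (σ ++ ρ) x i
      ≤ eval (Sum.elim x fun _ => t)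
          (X (Sum.inl i) + X (Sum.inr ()) * pjoin p'ᵢ (tcomp q'ᵢ p)) := by
  rw [wgt_append] at ht
  set v : Vn n → ℕ := Sum.elim x fun _ => t
  set M := eval v (pjoin p'ᵢ (tcomp q'ᵢ p))
  set y := runW σ x
  have hyp : y ≤ fun j => eval v (p j) := hbp x t (by omega)
  have hσ : y i ≤ x i + wgt σ * M := by
    refine (hbp.runW_le_of_eq_add_mul hpi x).trans (Nat.add_le_add_left ?_ _)
    refine Nat.mul_le_mul_left _ ((eval_le_eval_of_le p'ᵢ ?_).trans
      (eval_le_eval_pjoin_left _ _ v))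
    exact Sum.elim_le_elim_iff.2 ⟨le_rfl, fun _ => (by omega : wgt σ ≤ t)⟩
  have hρ : runW ρ y i ≤ y i + wgt ρ * M := by
    refine (hbq.runW_le_of_eq_add_mul hqi y).trans (Nat.add_le_add_left ?_ _)
    refine Nat.mul_le_mul_left _ ((eval_le_eval_of_le q'ᵢ ?_).trans
      ((eval_tcomp q'ᵢ p x t).symm.trans_le (eval_le_eval_pjoin_right _ _ v)))
    exact Sum.elim_le_elim_iff.2 ⟨hyp, fun _ => (by omega : wgt ρ ≤ t)⟩
  have hv : eval v (X (Sum.inl i) + X (Sum.inr ()) * pjoin p'ᵢ (tcomp q'ᵢ p)) = x i + t * M := by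
    simp [v, M]
  rw [runW_append, hv]
  calc runW ρ y i ≤ x i + (wgt σ + wgt ρ) * M := by nlinarith
    _ ≤ x i + t * M := by gcongr

end Traces

theorem stmt13_general {n : ℕ} (A : Fin n → MvPolynomial (Fin n) ℕ)
    (p q p' q' r : Fin n → MvPolynomial (Vn n) ℕ)
    (hp : ∀ i, i ∈ (A i).vars →
      p i = X (Sum.inl i) + X (Sum.inr ()) * p' i)
    (hq : ∀ i, i ∈ (A i).vars →
      q i = X (Sum.inl i) + X (Sum.inr ()) * q' i)
    (hr : ∀ i, (i ∈ (A i).vars →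
        r i = X (Sum.inl i) + X (Sum.inr ()) * pjoin (p' i) (tcomp (q' i) p)) ∧
      (i ∉ (A i).vars → r i = tcomp (q i) p))
    (σ ρ : WTrace n)
    (hbp : boundsTr p σ) (hbq : boundsTr q ρ) :
    boundsTr r (σ ++ ρ) := by
  intro x t ht i
  by_cases hself : i ∈ (A i).vars
  · rw [(hr i).1 hself]
    exact runW_append_le_absorb hbp hbq (hp i hself) (hq i hself) x ht
  · rw [(hr i).2 hself]
    exact boundsTr_tcomp_append hbp hbq x t ht i

/-- τ-absorbing composition soundness.  Let `p`, `q` be similar τ-closed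
iterative τ-multi-polynomials (common abstraction `A`; self-dependent components
have the form `xᵢ + τ·p[i]′` with `p[i]′` in lower-indexed self-dependent
variables; all components depend only on self-dependent variables of index ≤ i).
Let `r = q ⋆ p`, i.e. `r[i] = xᵢ + τ·(p[i]′ ⊔ (q[i]′ ∘ p))` for self-dependent
`i` and `r[i] = q[i] ∘ p` otherwise.  If `p` bounds `σ` and `q` bounds `ρ`
(weights all ≥ 1), then `q ⋆ p` bounds the concatenation `σρ`. -/
theorem stmt13 {n : ℕ} (A : Fin n → MvPolynomial (Fin n) ℕ)
    (p q p' q' r : Fin n → MvPolynomial (Vn n) ℕ)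
    (hsimp : ∀ i, flat (p i) = A i) (hsimq : ∀ i, flat (q i) = A i)
    (hp : ∀ i, i ∈ (A i).vars →
      p i = X (Sum.inl i) + X (Sum.inr ()) * p' i)
    (hq : ∀ i, i ∈ (A i).vars →
      q i = X (Sum.inl i) + X (Sum.inr ()) * q' i)
    (hitp : ∀ i j : Fin n, (Sum.inl j : Vn n) ∈ (p i).vars → j ∈ (A j).vars ∧ j ≤ i)
    (hitq : ∀ i j : Fin n, (Sum.inl j : Vn n) ∈ (q i).vars → j ∈ (A j).vars ∧ j ≤ i)
    (hp' : ∀ i j : Fin n, (Sum.inl j : Vn n) ∈ (p' i).vars → j ∈ (A j).vars ∧ j < i)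
    (hq' : ∀ i j : Fin n, (Sum.inl j : Vn n) ∈ (q' i).vars → j ∈ (A j).vars ∧ j < i)
    (hr : ∀ i, (i ∈ (A i).vars →
        r i = X (Sum.inl i) + X (Sum.inr ()) * pjoin (p' i) (tcomp (q' i) p)) ∧
      (i ∉ (A i).vars → r i = tcomp (q i) p))
    (σ ρ : WTrace n)
    (hwσ : ∀ st ∈ σ, 1 ≤ st.2) (hwρ : ∀ st ∈ ρ, 1 ≤ st.2)
    (hbp : boundsTr p σ) (hbq : boundsTr q ρ) :
    boundsTr r (σ ++ ρ) :=
  stmt13_general A p q p' q' r hp hq hr σ ρ hbp hbq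
end

section
/- Let p be an idempotent abstract τ-multi-polynomial (p ∘̂ p = p over the Boolean semiring). Then p[1/τ], the result of substituting 1 for τ (and re-flattening coefficients to {0,1}), is also idempotent; moreover, if p is neat (dependency graph minus self-loops is a DAG respecting the index order, and no p[i] has a monomial divisible by xᵢ other than xᵢ), then p[1/τ] is neat. -/
open MvPolynomial

/-- Abstract composition of abstract τ-multi-polynomials: substitute the
components of `q` for `x₁,…,xₙ` in `p` (leaving τ fixed), flattening
coefficients back to `{0,1}`. -/
noncomputable def acompT {n : ℕ} (p q : Fin n → MvPolynomial (Vn n) ℕ) :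
    Fin n → MvPolynomial (Vn n) ℕ :=
  fun i => absP (bind₁ (Sum.elim q (fun _ => X (Sum.inr ()))) (p i))

/-- `p[1/τ]`: substitute 1 for τ (and re-flatten coefficients to `{0,1}`). -/
noncomputable def sub1 {n : ℕ} (p : Fin n → MvPolynomial (Vn n) ℕ) :
    Fin n → MvPolynomial (Fin n) ℕ :=
  fun i => absP (aeval (Sum.elim X (fun _ => 1)) (p i))

/-- Abstract composition of τ-free abstract multi-polynomials. -/
noncomputable def acomp1 {n : ℕ} (p q : Fin n → MvPolynomial (Fin n) ℕ) :
    Fin n → MvPolynomial (Fin n) ℕ :=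
  fun i => absP (bind₁ q (p i))

/-! Flattening a polynomial over `ℕ` to `{0,1}` coefficients loses exactly what the semiring
map `ℕ → 𝔹` into the Boolean semiring loses (here `𝔹 = SetSemiring Unit`), so both abstract
compositions become honest substitutions over `𝔹`. There, setting `τ = 1` commutes with
substituting for `x₁,…,xₙ`, hence `p ∘ p = p` gives `p[1/τ] ∘ p[1/τ] = p[1/τ]`. Setting `τ = 1`
sends each monomial to its restriction to `x₁,…,xₙ`, so it creates no new variable and no new
monomial divisible by `xᵢ`, which is why neatness survives. -/

section Flattening

variable {σ : Type*}

lemma absP_congr {a b : MvPolynomial σ ℕ} (h : a.support = b.support) : absP a = absP b := by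
  rw [absP, absP, h]

lemma coeff_absP (q : MvPolynomial σ ℕ) (m : σ →₀ ℕ) [Decidable (m ∈ q.support)] :
    (absP q).coeff m = if m ∈ q.support then 1 else 0 := by
  classical
  simp [absP, coeff_sum, coeff_monomial]

lemma support_absP (q : MvPolynomial σ ℕ) : (absP q).support = q.support := by
  classical
  ext m
  rw [mem_support_iff, coeff_absP]
  split_ifs with h <;> simpa using h

lemma vars_absP (q : MvPolynomial σ ℕ) : (absP q).vars = q.vars := by
  classical
  ext j
  simp only [mem_vars_iff_mem_support, support_absP]

variable {S : Type*} [IdemCommSemiring S]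

lemma natCast_eq_one_of_idem {k : ℕ} (hk : k ≠ 0) : (k : S) = 1 := by
  induction k with
  | zero => exact absurd rfl hk
  | succ k ih =>
    rcases eq_or_ne k 0 with rfl | hk
    · simp
    · rw [Nat.cast_succ, ih hk, add_idem]

lemma map_natCast_absP (q : MvPolynomial σ ℕ) :
    map (Nat.castRingHom S) (absP q) = map (Nat.castRingHom S) q := by
  classical
  ext m
  rw [coeff_map, coeff_map, coeff_absP]
  split_ifs with h
  · rw [map_one, eq_natCast, natCast_eq_one_of_idem (mem_support_iff.mp h)]
  · rw [notMem_support_iff.mp h, map_zero]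

lemma support_map_natCast [Nontrivial S] (q : MvPolynomial σ ℕ) :
    (map (Nat.castRingHom S) q).support = q.support := by
  ext m
  simp only [mem_support_iff, coeff_map, eq_natCast]
  refine ⟨fun h hq => h (by simp [hq]), fun h => ?_⟩
  rw [natCast_eq_one_of_idem h]
  exact one_ne_zero

lemma absP_eq_of_map_natCast_eq [Nontrivial S] {a b : MvPolynomial σ ℕ}
    (h : map (Nat.castRingHom S) a = map (Nat.castRingHom S) b) : absP a = absP b :=
  absP_congr (by rw [← support_map_natCast (S := S), h, support_map_natCast])

end Flattening

section EvalInrOne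

variable {R : Type*} [CommSemiring R] {σ ι : Type*}

noncomputable abbrev evalInrOne : MvPolynomial (σ ⊕ ι) R →ₐ[R] MvPolynomial σ R :=
  aeval (Sum.elim X fun _ => 1)

lemma map_evalInrOne {S : Type*} [CommSemiring S] (f : R →+* S) (q : MvPolynomial (σ ⊕ ι) R) :
    map f (evalInrOne q) = evalInrOne (map f q) := by
  change map f (bind₁ _ q) = bind₁ _ (map f q)
  rw [map_bind₁]
  congr 2
  funext v
  cases v <;> simp

lemma map_bind₁_sumElim_X_inr {S : Type*} [CommSemiring S] (f : R →+* S)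
    (P : σ → MvPolynomial (σ ⊕ ι) R) (q : MvPolynomial (σ ⊕ ι) R) :
    map f (bind₁ (Sum.elim P fun u => X (Sum.inr u)) q)
      = bind₁ (Sum.elim (fun j => map f (P j)) fun u => X (Sum.inr u)) (map f q) := by
  rw [map_bind₁]
  congr 2
  funext v
  cases v <;> simp

lemma bind₁_evalInrOne_evalInrOne (P : σ → MvPolynomial (σ ⊕ ι) R)
    (hP : ∀ i, bind₁ (Sum.elim P fun u => X (Sum.inr u)) (P i) = P i) (i : σ) :
    bind₁ (fun j => evalInrOne (P j)) (evalInrOne (P i)) = evalInrOne (P i) := by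
  have key : ∀ q, bind₁ (fun j => evalInrOne (P j)) (evalInrOne q)
      = evalInrOne (bind₁ (Sum.elim P fun u => X (Sum.inr u)) q) := by
    intro q
    change bind₁ _ (bind₁ _ q) = bind₁ _ (bind₁ _ q)
    rw [bind₁_bind₁, bind₁_bind₁]
    congr 2
    funext v
    cases v <;> simp
  rw [key, hP]

lemma evalInrOne_monomial (m : σ ⊕ ι →₀ ℕ) (a : R) :
    evalInrOne (monomial m a) = monomial (m.comapDomain Sum.inl Sum.inl_injective.injOn) a := by
  induction m using Finsupp.induction generalizing a with
  | zero => simp [monomial_zero']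
  | single_add v e m _ _ ih =>
    rw [← one_mul a, ← monomial_mul, map_mul, ih, ← X_pow_eq_monomial, map_pow, aeval_X,
      Finsupp.comapDomain_add_of_injective Sum.inl_injective, ← monomial_mul]
    congr 1
    cases v with
    | inl j => simp [Finsupp.comapDomain_single, X_pow_eq_monomial]
    | inr u => simp [Finsupp.comapDomain_single_of_not_mem_range]

lemma exists_mem_support_of_mem_support_evalInrOne {q : MvPolynomial (σ ⊕ ι) R} {d : σ →₀ ℕ}
    (hd : d ∈ (evalInrOne q).support) :
    ∃ m ∈ q.support, m.comapDomain Sum.inl Sum.inl_injective.injOn = d := by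
  classical
  rw [q.as_sum, map_sum] at hd
  obtain ⟨m, hm, hd⟩ := Finset.mem_biUnion.mp (support_sum hd)
  rw [evalInrOne_monomial] at hd
  exact ⟨m, hm, (Finset.mem_singleton.mp (support_monomial_subset hd)).symm⟩

lemma inl_mem_vars_of_mem_vars_evalInrOne {q : MvPolynomial (σ ⊕ ι) R} {j : σ}
    (hj : j ∈ (evalInrOne q).vars) : Sum.inl j ∈ q.vars := by
  obtain ⟨d, hd, hjd⟩ := (mem_vars_iff_mem_support _).mp hj
  obtain ⟨m, hm, rfl⟩ := exists_mem_support_of_mem_support_evalInrOne hd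
  exact (mem_vars_iff_mem_support _).mpr ⟨m, hm, by simpa using hjd⟩

lemma eq_single_of_mem_support_evalInrOne {q : MvPolynomial (σ ⊕ ι) R} {i : σ}
    (hq : ∀ m ∈ q.support, m (Sum.inl i) ≠ 0 → m = Finsupp.single (Sum.inl i) 1)
    {d : σ →₀ ℕ} (hd : d ∈ (evalInrOne q).support) (hdi : d i ≠ 0) : d = Finsupp.single i 1 := by
  obtain ⟨m, hm, rfl⟩ := exists_mem_support_of_mem_support_evalInrOne hd
  rw [hq m hm hdi, Finsupp.comapDomain_single]

end EvalInrOne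

lemma sub1_apply {n : ℕ} (p : Fin n → MvPolynomial (Vn n) ℕ) (i : Fin n) :
    sub1 p i = absP (evalInrOne (p i)) := rfl

lemma acomp1_sub1_self {n : ℕ} {p : Fin n → MvPolynomial (Vn n) ℕ} (hp : acompT p p = p) :
    acomp1 (sub1 p) (sub1 p) = sub1 p := by
  have : Nontrivial (SetSemiring Unit) :=
    ⟨⟨0, 1, fun h => Set.singleton_ne_empty () (congrArg SetSemiring.down h).symm⟩⟩
  set φ := Nat.castRingHom (SetSemiring Unit)
  have map_sub1 : ∀ j, map φ (sub1 p j) = evalInrOne (map φ (p j)) := fun j => by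
    rw [sub1_apply, map_natCast_absP, map_evalInrOne]
  have hP : ∀ i, bind₁ (Sum.elim (fun j => map φ (p j)) fun u => X (Sum.inr u)) (map φ (p i))
      = map φ (p i) := fun i => by
    rw [← map_bind₁_sumElim_X_inr, ← map_natCast_absP]
    exact congrArg (map φ) (congrFun hp i)
  funext i
  refine absP_eq_of_map_natCast_eq (S := SetSemiring Unit) ?_
  calc map φ (bind₁ (sub1 p) (sub1 p i))
      = bind₁ (fun j => evalInrOne (map φ (p j))) (evalInrOne (map φ (p i))) := by
        simp only [map_bind₁, map_sub1]
    _ = evalInrOne (map φ (p i)) := bind₁_evalInrOne_evalInrOne _ hP i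
    _ = map φ (evalInrOne (p i)) := (map_evalInrOne φ (p i)).symm

theorem stmt19_general {n : ℕ} (p : Fin n → MvPolynomial (Vn n) ℕ)
    (hidem : acompT p p = p) :
    acomp1 (sub1 p) (sub1 p) = sub1 p ∧
    (((∀ i j : Fin n, (Sum.inl j : Vn n) ∈ (p i).vars → j ≤ i) ∧
        (∀ i : Fin n, ∀ m ∈ (p i).support,
          m (Sum.inl i) ≠ 0 → m = Finsupp.single (Sum.inl i) 1)) →
      ((∀ i j : Fin n, j ∈ (sub1 p i).vars → j ≤ i) ∧
        (∀ i : Fin n, ∀ m ∈ (sub1 p i).support,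
          m i ≠ 0 → m = Finsupp.single i 1))) := by
  refine ⟨acomp1_sub1_self hidem, fun ⟨hdag, hloop⟩ => ⟨fun i j hj => ?_, fun i d hd hdi => ?_⟩⟩
  · rw [sub1_apply, vars_absP] at hj
    exact hdag i j (inl_mem_vars_of_mem_vars_evalInrOne hj)
  · rw [sub1_apply, support_absP] at hd
    exact eq_single_of_mem_support_evalInrOne (hloop i) hd hdi

/-- If the abstract τ-multi-polynomial `p` (all coefficients 0/1) is idempotent
under abstract composition, then so is `p[1/τ]`; moreover, if `p` is neat
(dependency graph minus self-loops is a DAG respecting the index order, and no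
`p[i]` has a monomial divisible by `xᵢ` other than `xᵢ`), then `p[1/τ]` is neat. -/
theorem stmt19 {n : ℕ} (p : Fin n → MvPolynomial (Vn n) ℕ)
    (habs : ∀ i m, (p i).coeff m ≤ 1)
    (hidem : acompT p p = p) :
    acomp1 (sub1 p) (sub1 p) = sub1 p ∧
    (((∀ i j : Fin n, (Sum.inl j : Vn n) ∈ (p i).vars → j ≤ i) ∧
        (∀ i : Fin n, ∀ m ∈ (p i).support,
          m (Sum.inl i) ≠ 0 → m = Finsupp.single (Sum.inl i) 1)) →
      ((∀ i j : Fin n, j ∈ (sub1 p i).vars → j ≤ i) ∧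
        (∀ i : Fin n, ∀ m ∈ (sub1 p i).support,
          m i ≠ 0 → m = Finsupp.single i 1))) :=
  stmt19_general p hidem
end
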